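/- The Shamash differential built from the Taylor homotopies squares to zero over R: let R = Q/⟨a₁,…,a_c⟩ and let F_n be the free R-module with basis {ε_{(u,S)} : u ∈ ℕ^c, S ⊆ {1,…,r}, 2|u| + |S| = n}. Define φ : F_n → F_{n-1} by φ(ε_{(u,S)}) = Σ over the coordinates of the image in R of τ(ε_S) placed in index u, plus Σ_{i : u_i > 0} the image in R of σ_i(ε_S) placed in index u − e_i (that is, φ(ε_{(u,S)}) = Σ_{S'} τ_{S',S} ε_{(u,S')} + Σ_{i : u_i > 0} Σ_{S''} (σ_i)_{S'',S} ε_{(u−e_i,S'')}, where τ_{S',S} and (σ_i)_{S'',S} are the matrix entries of τ and σ_i reduced mod ⟨a₁,…,a_c⟩). Then φ ∘ φ = 0. -/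

import Mathlib

open MvPolynomial

/-- The position `p_{t,S}` of `t` in `S ∪ {t}`: one plus the number of elements of `S`
smaller than `t`. -/
def taylorPos {r : ℕ} (S : Finset (Fin r)) (t : Fin r) : ℕ :=
  (S.filter fun s => s < t).card + 1

variable (𝕜 : Type*) [Field 𝕜] {n r : ℕ}

/-- `m_S`: the lcm of the monomials `m_j = x^{v j}` for `j ∈ S` (equal to `1` when `S = ∅`). -/
noncomputable def taylorLcm (v : Fin r → (Fin n →₀ ℕ)) (S : Finset (Fin r)) :
    MvPolynomial (Fin n) 𝕜 :=
  monomial (S.sup v) 1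

/-- The matrix entry of the Taylor differential: `(-1)^{k-i} m_S / m_{S∖{s}}`
(where `i = p_{s,S}` is the position of `s` in `S` and `k = |S|`). -/
noncomputable def taylorEntry (v : Fin r → (Fin n →₀ ℕ)) (S : Finset (Fin r)) (s : Fin r) :
    MvPolynomial (Fin n) 𝕜 :=
  (-1) ^ (S.card - taylorPos S s) * monomial (S.sup v - (S.erase s).sup v) 1

/-- The matrix entry of the homotopy `σ`:
`(-1)^{k - p_{t,S} - 1} f_t m_t m_S / m_{S ∪ {t}}` (where `k = |S|`); the sign is written as
`(-1)^{k + p_{t,S} + 1}`, which agrees with `(-1)^{k - p_{t,S} - 1}` since the exponents have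
the same parity. -/
noncomputable def htpyEntry (v : Fin r → (Fin n →₀ ℕ)) (f : Fin r → MvPolynomial (Fin n) 𝕜)
    (S : Finset (Fin r)) (t : Fin r) : MvPolynomial (Fin n) 𝕜 :=
  (-1) ^ (S.card + taylorPos S t + 1) *
    (f t * monomial (v t + S.sup v - (insert t S).sup v) 1)

/-- The total module of the Taylor complex: the free `Q`-module with basis
`{ε_S : S ⊆ {1,…,r}}`; the basis element `ε_S` is `Finsupp.single S 1`. -/
abbrev TaylorModule (n r : ℕ) := Finset (Fin r) →₀ MvPolynomial (Fin n) 𝕜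

/-- The Taylor differential `τ` on the total module,
`τ(ε_S) = Σ_{s ∈ S} (-1)^{|S| - p_{s,S}} (m_S / m_{S∖{s}}) ε_{S∖{s}}`. -/
noncomputable def taylorTau (v : Fin r → (Fin n →₀ ℕ)) :
    TaylorModule 𝕜 n r →ₗ[MvPolynomial (Fin n) 𝕜] TaylorModule 𝕜 n r :=
  Finsupp.lsum (MvPolynomial (Fin n) 𝕜) fun S =>
    LinearMap.toSpanSingleton _ _
      (∑ s ∈ S, Finsupp.single (S.erase s) (taylorEntry 𝕜 v S s))

/-- The homotopy `σ` attached to a coefficient family `f` (with `a = Σ_j f_j m_j`):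
`σ(ε_S) = Σ_{t ∉ S} (-1)^{|S| - p_{t,S} - 1} (f_t m_t m_S / m_{S∪{t}}) ε_{S∪{t}}`. -/
noncomputable def taylorHtpy (v : Fin r → (Fin n →₀ ℕ)) (f : Fin r → MvPolynomial (Fin n) 𝕜) :
    TaylorModule 𝕜 n r →ₗ[MvPolynomial (Fin n) 𝕜] TaylorModule 𝕜 n r :=
  Finsupp.lsum (MvPolynomial (Fin n) 𝕜) fun S =>
    LinearMap.toSpanSingleton _ _
      (∑ t ∈ Sᶜ, Finsupp.single (insert t S) (htpyEntry 𝕜 v f S t))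

set_option synthInstance.maxHeartbeats 1000000
set_option maxHeartbeats 1000000

/-- The quotient ring `R = Q/⟨a₁,…,a_c⟩`. -/
abbrev CIRing (𝕜 : Type*) [Field 𝕜] (n c : ℕ) (a : Fin c → MvPolynomial (Fin n) 𝕜) :=
  MvPolynomial (Fin n) 𝕜 ⧸ Ideal.span (Set.range a)

/-- The total module of the Shamash construction over `R = Q/⟨a₁,…,a_c⟩`: the free
`R`-module with basis `{ε_{(u,S)} : u ∈ ℕ^c, S ⊆ {1,…,r}}` (the degree-`n` piece `F_n` is
spanned by the `ε_{(u,S)}` with `2|u| + |S| = n`). -/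
abbrev ShamashModule (𝕜 : Type*) [Field 𝕜] (n r c : ℕ)
    (a : Fin c → MvPolynomial (Fin n) 𝕜) :=
  ((Fin c →₀ ℕ) × Finset (Fin r)) →₀ CIRing 𝕜 n c a

/-- The Shamash differential `φ` built from the Taylor homotopies:
`φ(ε_{(u,S)}) = Σ_{S'} τ_{S',S} ε_{(u,S')} + Σ_{i : u_i > 0} Σ_{S''} (σ_i)_{S'',S} ε_{(u−e_i,S'')}`,
where the matrix entries of `τ` and `σ_i` are reduced mod `⟨a₁,…,a_c⟩`. -/
noncomputable def shamashPhi {𝕜 : Type*} [Field 𝕜] {n r c : ℕ}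
    (v : Fin r → (Fin n →₀ ℕ)) (a : Fin c → MvPolynomial (Fin n) 𝕜)
    (f : Fin c → Fin r → MvPolynomial (Fin n) 𝕜) :
    ShamashModule 𝕜 n r c a →ₗ[CIRing 𝕜 n c a] ShamashModule 𝕜 n r c a :=
  Finsupp.lsum (CIRing 𝕜 n c a)
    fun p : (Fin c →₀ ℕ) × Finset (Fin r) =>
    LinearMap.toSpanSingleton (CIRing 𝕜 n c a) (ShamashModule 𝕜 n r c a)
      ((∑ s ∈ p.2,
          Finsupp.single (p.1, p.2.erase s)
            (algebraMap (MvPolynomial (Fin n) 𝕜) (CIRing 𝕜 n c a)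
              (taylorEntry 𝕜 v p.2 s))) +
        ∑ i ∈ Finset.univ.filter fun i => 0 < p.1 i, ∑ t ∈ p.2ᶜ,
          Finsupp.single (p.1 - Finsupp.single i 1, insert t p.2)
            (algebraMap (MvPolynomial (Fin n) 𝕜) (CIRing 𝕜 n c a)
              (htpyEntry 𝕜 v (f i) p.2 t)))


/-!
Write `ι_u` for the map placing the Taylor complex, reduced modulo `I = ⟨a₁,…,a_c⟩`, in the
summand of index `u`. Then `φ ∘ ι_u = ι_u ∘ τ + Σ_{u_i > 0} ι_{u - e_i} ∘ σ_i`, so `φ² ∘ ι_u` is a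
sum of terms `ι_u τ²`, `ι_{u - e_i} (τ σ_i + σ_i τ)` and `ι_{u - e_i - e_j} σ_j σ_i`. Over `Q` one
has `τ² = 0`, `τ σ_i + σ_i τ = a_i`, `σ_i σ_j + σ_j σ_i = 0` and `σ_i² = 0`: the `a_i` die in
`R`, and the last terms cancel in pairs under `(i, j) ↦ (j, i)`.

The Taylor identities are checked on matrix entries. Both `τ` and `σ` have sign
`(-1)^{#{x ∈ S : t < x}}` at `(S, t)`, so every sign comparison is an exact count, and the
monomial factors telescope as quotients of lcms.
-/

open Finset

section Combinatorics

variable {α : Type*}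

theorem Finset.sum_sum_eq_zero_of_add_swap {M : Type*} [AddCommMonoid M] {T : Finset α}
    {U : α → Finset α} (hU : ∀ x y, x ∈ T ∧ y ∈ U x ↔ y ∈ T ∧ x ∈ U y) (F : α → α → M)
    (hF : ∀ x ∈ T, ∀ y ∈ U x, F x y + F y x = 0) (hdiag : ∀ x ∈ T, x ∈ U x → F x x = 0) :
    ∑ x ∈ T, ∑ y ∈ U x, F x y = 0 := by
  rw [sum_sigma']
  refine sum_involution (fun p _ => ⟨p.2, p.1⟩) (fun p hp => ?_) (fun p hp hne => ?_)
    (fun p hp => ?_) (fun p _ => rfl)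
  · rw [mem_sigma] at hp
    exact hF _ hp.1 _ hp.2
  · rw [mem_sigma] at hp
    intro heq
    have hp12 : p.2 = p.1 := congrArg Sigma.fst heq
    exact hne (by rw [hp12]; exact hdiag _ hp.1 (hp12 ▸ hp.2))
  · rw [mem_sigma] at hp ⊢
    exact (hU _ _).mp hp

variable [LinearOrder α]

def countAbove (S : Finset α) (t : α) : ℕ := #(S.filter fun x => t < x)

theorem card_filter_lt_add_countAbove {S : Finset α} {t : α} (ht : t ∉ S) :
    #(S.filter (· < t)) + countAbove S t = #S := by
  rw [countAbove, ← card_filter_add_card_filter_not (s := S) (p := fun x => x < t)]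
  congr 2
  apply filter_congr
  intro x hx
  have hxt : x ≠ t := fun h => ht (h ▸ hx)
  exact ⟨fun h => not_lt.mpr h.le, fun h => lt_of_le_of_ne (not_lt.mp h) hxt.symm⟩

theorem countAbove_insert {S : Finset α} {s : α} (hs : s ∉ S) (t : α) :
    countAbove (insert s S) t = countAbove S t + if t < s then 1 else 0 := by
  unfold countAbove
  rw [filter_insert]
  split_ifs with h
  · exact card_insert_of_notMem fun hm => hs (mem_filter.mp hm).1
  · rfl

theorem countAbove_erase {S : Finset α} {s : α} (hs : s ∈ S) (t : α) :
    countAbove S t = countAbove (S.erase s) t + if t < s then 1 else 0 := by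
  conv_lhs => rw [← insert_erase hs]
  exact countAbove_insert (notMem_erase s S) t

end Combinatorics

theorem tsub_add_add_tsub {M : Type*} [AddCommMonoid M] [PartialOrder M]
    [CanonicallyOrderedAdd M] [Sub M] [OrderedSub M] [AddLeftReflectLE M] {a b c d : M}
    (hba : b ≤ a) (hcd : c ≤ d + b) :
    a - b + (d + b - c) = a + d - c := by
  rw [← add_tsub_assoc_of_le hcd, add_comm d b, ← add_assoc, tsub_add_cancel_of_le hba]

theorem sup_insert_le_add {M : Type*} [AddCommMonoid M] [SemilatticeSup M] [OrderBot M]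
    [CanonicallyOrderedAdd M] {ι : Type*} [DecidableEq ι]
    (v : ι → M) (S : Finset ι) (t : ι) : (insert t S).sup v ≤ v t + S.sup v := by
  rw [sup_insert]
  exact sup_le le_self_add le_add_self

theorem neg_one_pow_mul_add_neg_one_pow_mul {R : Type*} [CommRing R] {k₁ k₂ k₃ k₄ : ℕ}
    {x₁ x₂ x₃ x₄ : R} (hk : k₃ + k₄ = k₁ + k₂ + 1) (hx : x₁ * x₂ = x₃ * x₄) :
    (-1) ^ k₁ * x₁ * ((-1) ^ k₂ * x₂) + (-1) ^ k₃ * x₃ * ((-1) ^ k₄ * x₄) = 0 := by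
  calc _ = (-1) ^ (k₁ + k₂) * (x₁ * x₂) + (-1) ^ (k₃ + k₄) * (x₃ * x₄) := by ring
    _ = 0 := by rw [hk, hx]; ring

theorem neg_one_pow_mul_neg_one_pow_mul {R : Type*} [CommRing R] (k : ℕ) (x y : R) :
    (-1) ^ k * x * ((-1) ^ k * y) = x * y := by
  rw [mul_mul_mul_comm, ← mul_pow, neg_one_mul, neg_neg, one_pow, one_mul]

section TaylorEntries

variable {𝕜} {v : Fin r → (Fin n →₀ ℕ)} {S : Finset (Fin r)} {s s' t t' : Fin r}

theorem taylorEntry_eq_of_mem (hs : s ∈ S) :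
    taylorEntry 𝕜 v S s = (-1) ^ countAbove S s * monomial (S.sup v - (S.erase s).sup v) 1 := by
  have hcard := card_filter_lt_add_countAbove (notMem_erase s S)
  have hbelow : (S.erase s).filter (· < s) = S.filter (· < s) := by
    rw [filter_erase, erase_eq_of_notMem (by simp)]
  have habove : countAbove S s = countAbove (S.erase s) s := by
    simpa using countAbove_erase hs s
  have herase := card_erase_add_one hs
  rw [hbelow] at hcard
  unfold taylorEntry taylorPos
  congr 2
  omega

theorem htpyEntry_eq_of_notMem (g : Fin r → MvPolynomial (Fin n) 𝕜) (ht : t ∉ S) :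
    htpyEntry 𝕜 v g S t
      = (-1) ^ countAbove S t * (g t * monomial (v t + S.sup v - (insert t S).sup v) 1) := by
  have hcard := card_filter_lt_add_countAbove ht
  unfold htpyEntry taylorPos
  rw [show #S + (#(S.filter (· < t)) + 1) + 1 = countAbove S t + 2 * (#(S.filter (· < t)) + 1)
    by omega, pow_add, pow_mul, neg_one_sq, one_pow, mul_one]

theorem taylorEntry_mul_taylorEntry_add_swap (hs : s ∈ S) (hs' : s' ∈ S) (hne : s ≠ s') :
    taylorEntry 𝕜 v S s * taylorEntry 𝕜 v (S.erase s) s'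
      + taylorEntry 𝕜 v S s' * taylorEntry 𝕜 v (S.erase s') s = 0 := by
  wlog hlt : s' < s generalizing s s'
  · rw [add_comm]
    exact this hs' hs hne.symm (lt_of_le_of_ne (not_lt.mp hlt) hne)
  rw [taylorEntry_eq_of_mem hs, taylorEntry_eq_of_mem (mem_erase.mpr ⟨hne.symm, hs'⟩),
    taylorEntry_eq_of_mem hs', taylorEntry_eq_of_mem (mem_erase.mpr ⟨hne, hs⟩)]
  apply neg_one_pow_mul_add_neg_one_pow_mul
  · rw [countAbove_erase hs s', countAbove_erase hs' s, if_pos hlt, if_neg hlt.not_gt]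
    omega
  · rw [monomial_mul, monomial_mul, one_mul,
      tsub_add_tsub_cancel (sup_mono (erase_subset _ _)) (sup_mono (erase_subset _ _)),
      tsub_add_tsub_cancel (sup_mono (erase_subset _ _)) (sup_mono (erase_subset _ _)),
      erase_right_comm]

theorem htpyEntry_mul_htpyEntry_add_swap (g g' : Fin r → MvPolynomial (Fin n) 𝕜) (ht : t ∉ S)
    (ht' : t' ∉ S) (hne : t ≠ t') :
    htpyEntry 𝕜 v g' S t * htpyEntry 𝕜 v g (insert t S) t'
      + htpyEntry 𝕜 v g S t' * htpyEntry 𝕜 v g' (insert t' S) t = 0 := by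
  wlog hlt : t < t' generalizing t t' g g'
  · rw [add_comm]
    exact this g' g ht' ht hne.symm (lt_of_le_of_ne (not_lt.mp hlt) hne.symm)
  rw [htpyEntry_eq_of_notMem g' ht,
    htpyEntry_eq_of_notMem g (by simp [hne.symm, ht'] : t' ∉ insert t S),
    htpyEntry_eq_of_notMem g ht', htpyEntry_eq_of_notMem g' (by simp [hne, ht] : t ∉ insert t' S)]
  apply neg_one_pow_mul_add_neg_one_pow_mul
  · rw [countAbove_insert ht t', countAbove_insert ht' t, if_pos hlt, if_neg hlt.not_gt]
    omega
  · rw [mul_mul_mul_comm, mul_mul_mul_comm (g t'), monomial_mul, monomial_mul, one_mul,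
      tsub_add_add_tsub (sup_insert_le_add v S t) (sup_insert_le_add v _ t'),
      tsub_add_add_tsub (sup_insert_le_add v S t') (sup_insert_le_add v _ t), insert_comm,
      mul_comm (g t'), add_right_comm (v t), add_right_comm (v t'), add_comm (v t)]

theorem taylorEntry_mul_htpyEntry_add_htpyEntry_mul_taylorEntry
    (g : Fin r → MvPolynomial (Fin n) 𝕜) (hs : s ∈ S) (ht : t ∉ S) :
    taylorEntry 𝕜 v S s * htpyEntry 𝕜 v g (S.erase s) t
      + htpyEntry 𝕜 v g S t * taylorEntry 𝕜 v (insert t S) s = 0 := by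
  have hts : t ≠ s := fun h => ht (h ▸ hs)
  rw [taylorEntry_eq_of_mem hs, htpyEntry_eq_of_notMem g (fun h => ht (mem_of_mem_erase h)),
    htpyEntry_eq_of_notMem g ht, taylorEntry_eq_of_mem (mem_insert_of_mem hs)]
  apply neg_one_pow_mul_add_neg_one_pow_mul
  · rw [countAbove_erase hs t, countAbove_insert ht s]
    rcases lt_or_gt_of_ne hts with h | h <;> simp only [h, h.not_gt, if_true, if_false] <;> omega
  · rw [mul_left_comm, mul_assoc, monomial_mul, monomial_mul, one_mul,
      tsub_add_add_tsub (sup_mono (erase_subset _ _)) (sup_insert_le_add v _ t),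
      tsub_add_tsub_cancel (sup_insert_le_add v S t) (sup_mono (erase_subset _ _)),
      erase_insert_of_ne hts, add_comm (S.sup v)]

theorem taylorEntry_mul_htpyEntry_self (g : Fin r → MvPolynomial (Fin n) 𝕜) (hs : s ∈ S) :
    taylorEntry 𝕜 v S s * htpyEntry 𝕜 v g (S.erase s) s = g s * monomial (v s) 1 := by
  rw [taylorEntry_eq_of_mem hs, htpyEntry_eq_of_notMem g (notMem_erase s S), countAbove_erase hs s,
    if_neg (lt_irrefl s), add_zero, neg_one_pow_mul_neg_one_pow_mul, mul_left_comm, monomial_mul,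
    one_mul, tsub_add_add_tsub (sup_mono (erase_subset s S)) (sup_insert_le_add v _ s),
    insert_erase hs, add_tsub_cancel_left]

theorem htpyEntry_mul_taylorEntry_self (g : Fin r → MvPolynomial (Fin n) 𝕜) (ht : t ∉ S) :
    htpyEntry 𝕜 v g S t * taylorEntry 𝕜 v (insert t S) t = g t * monomial (v t) 1 := by
  rw [htpyEntry_eq_of_notMem g ht, taylorEntry_eq_of_mem (mem_insert_self t S),
    countAbove_insert ht t, if_neg (lt_irrefl t), add_zero, neg_one_pow_mul_neg_one_pow_mul,
    mul_assoc, monomial_mul, one_mul,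
    tsub_add_tsub_cancel (sup_insert_le_add v S t) (sup_mono (erase_subset t _)),
    erase_insert ht, add_tsub_cancel_right]

end TaylorEntries

section TaylorComplex

variable {𝕜} (v : Fin r → (Fin n →₀ ℕ))

theorem taylorTau_single (S : Finset (Fin r)) (q : MvPolynomial (Fin n) 𝕜) :
    taylorTau 𝕜 v (Finsupp.single S q)
      = ∑ s ∈ S, Finsupp.single (S.erase s) (q * taylorEntry 𝕜 v S s) := by
  simp only [taylorTau, Finsupp.lsum_single, LinearMap.toSpanSingleton_apply, smul_sum,
    Finsupp.smul_single, smul_eq_mul]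

theorem taylorHtpy_single (g : Fin r → MvPolynomial (Fin n) 𝕜) (S : Finset (Fin r))
    (q : MvPolynomial (Fin n) 𝕜) :
    taylorHtpy 𝕜 v g (Finsupp.single S q)
      = ∑ t ∈ Sᶜ, Finsupp.single (insert t S) (q * htpyEntry 𝕜 v g S t) := by
  simp only [taylorHtpy, Finsupp.lsum_single, LinearMap.toSpanSingleton_apply, smul_sum,
    Finsupp.smul_single, smul_eq_mul]

theorem taylorTau_comp_taylorTau : taylorTau 𝕜 v ∘ₗ taylorTau 𝕜 v = 0 := by
  ext S : 2
  simp only [LinearMap.comp_apply, Finsupp.lsingle_apply, LinearMap.zero_apply, taylorTau_single,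
    map_sum, one_mul]
  refine sum_sum_eq_zero_of_add_swap (fun s s' => ?_) _ (fun s hs s' hs' => ?_)
    (fun s _ hs => absurd hs (notMem_erase s S))
  · simp only [mem_erase]
    tauto
  · rw [erase_right_comm, ← Finsupp.single_add, taylorEntry_mul_taylorEntry_add_swap hs
      (mem_of_mem_erase hs') (ne_of_mem_erase hs').symm, Finsupp.single_zero]

theorem taylorHtpy_comp_self (g : Fin r → MvPolynomial (Fin n) 𝕜) :
    taylorHtpy 𝕜 v g ∘ₗ taylorHtpy 𝕜 v g = 0 := by
  ext S : 2
  simp only [LinearMap.comp_apply, Finsupp.lsingle_apply, LinearMap.zero_apply, taylorHtpy_single,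
    map_sum, one_mul]
  refine sum_sum_eq_zero_of_add_swap (fun t t' => ?_) _ (fun t ht t' ht' => ?_)
    (fun t _ ht => absurd (mem_insert_self t S) (mem_compl.mp ht))
  · simp only [mem_compl, mem_insert]
    grind
  · simp only [mem_compl, mem_insert, not_or] at ht ht'
    rw [insert_comm, ← Finsupp.single_add,
      htpyEntry_mul_htpyEntry_add_swap g g ht ht'.2 (Ne.symm ht'.1), Finsupp.single_zero]

theorem taylorHtpy_comp_add_comp_swap (g g' : Fin r → MvPolynomial (Fin n) 𝕜) :
    taylorHtpy 𝕜 v g ∘ₗ taylorHtpy 𝕜 v g' + taylorHtpy 𝕜 v g' ∘ₗ taylorHtpy 𝕜 v g = 0 := by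
  ext S : 2
  simp only [LinearMap.add_apply, LinearMap.comp_apply, Finsupp.lsingle_apply,
    LinearMap.zero_apply, taylorHtpy_single, map_sum, one_mul, ← sum_add_distrib]
  refine sum_sum_eq_zero_of_add_swap (fun t t' => ?_) _ (fun t ht t' ht' => ?_)
    (fun t _ ht => absurd (mem_insert_self t S) (mem_compl.mp ht))
  · simp only [mem_compl, mem_insert]
    grind
  · simp only [mem_compl, mem_insert, not_or] at ht ht'
    have h₁ := htpyEntry_mul_htpyEntry_add_swap g g' ht ht'.2 (Ne.symm ht'.1) (v := v)
    have h₂ := htpyEntry_mul_htpyEntry_add_swap g' g ht ht'.2 (Ne.symm ht'.1) (v := v)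
    rw [insert_comm t, ← Finsupp.single_add, ← Finsupp.single_add, ← Finsupp.single_add]
    refine Finsupp.single_eq_zero.mpr ?_
    linear_combination h₁ + h₂

theorem taylorTau_comp_taylorHtpy_add (g : Fin r → MvPolynomial (Fin n) 𝕜) :
    taylorTau 𝕜 v ∘ₗ taylorHtpy 𝕜 v g + taylorHtpy 𝕜 v g ∘ₗ taylorTau 𝕜 v
      = (∑ j, g j * monomial (v j) 1) • LinearMap.id := by
  ext S : 2
  simp only [LinearMap.add_apply, LinearMap.comp_apply, Finsupp.lsingle_apply,
    LinearMap.smul_apply, LinearMap.id_apply, Finsupp.smul_single, smul_eq_mul, mul_one,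
    taylorHtpy_single, taylorTau_single, map_sum, one_mul]
  have hτσ : ∀ t ∈ Sᶜ, ∑ s ∈ insert t S,
      Finsupp.single ((insert t S).erase s) (htpyEntry 𝕜 v g S t * taylorEntry 𝕜 v (insert t S) s)
        = Finsupp.single S (g t * monomial (v t) 1) + ∑ s ∈ S,
          Finsupp.single ((insert t S).erase s)
            (htpyEntry 𝕜 v g S t * taylorEntry 𝕜 v (insert t S) s) := fun t ht => by
    rw [sum_insert (mem_compl.mp ht), erase_insert (mem_compl.mp ht),
      htpyEntry_mul_taylorEntry_self g (mem_compl.mp ht)]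
  have hστ : ∀ s ∈ S, ∑ t ∈ (S.erase s)ᶜ,
      Finsupp.single (insert t (S.erase s)) (taylorEntry 𝕜 v S s * htpyEntry 𝕜 v g (S.erase s) t)
        = Finsupp.single S (g s * monomial (v s) 1) + ∑ t ∈ Sᶜ,
          Finsupp.single (insert t (S.erase s))
            (taylorEntry 𝕜 v S s * htpyEntry 𝕜 v g (S.erase s) t) := fun s hs => by
    rw [compl_erase, sum_insert (by simpa using hs), insert_erase hs,
      taylorEntry_mul_htpyEntry_self g hs]
  have hcross : ∑ t ∈ Sᶜ, ∑ s ∈ S, Finsupp.single ((insert t S).erase s)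
        (htpyEntry 𝕜 v g S t * taylorEntry 𝕜 v (insert t S) s)
      + ∑ s ∈ S, ∑ t ∈ Sᶜ, Finsupp.single (insert t (S.erase s))
        (taylorEntry 𝕜 v S s * htpyEntry 𝕜 v g (S.erase s) t) = 0 := by
    rw [sum_comm (s := S), ← sum_add_distrib]
    refine sum_eq_zero fun t ht => ?_
    rw [← sum_add_distrib]
    refine sum_eq_zero fun s hs => ?_
    have hts : t ≠ s := fun h => mem_compl.mp ht (h ▸ hs)
    rw [erase_insert_of_ne hts, ← Finsupp.single_add, add_comm,
      taylorEntry_mul_htpyEntry_add_htpyEntry_mul_taylorEntry g hs (mem_compl.mp ht),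
      Finsupp.single_zero]
  rw [sum_congr rfl hτσ, sum_congr rfl hστ, sum_add_distrib, sum_add_distrib,
    add_add_add_comm, hcross, add_zero, add_comm, ← Finsupp.single_finsetSum,
    ← Finsupp.single_finsetSum, ← Finsupp.single_add, sum_add_sum_compl]

end TaylorComplex

section Shamash

variable {𝕜} {c : ℕ} (v : Fin r → (Fin n →₀ ℕ)) (a : Fin c → MvPolynomial (Fin n) 𝕜)
  (f : Fin c → Fin r → MvPolynomial (Fin n) 𝕜)

noncomputable def shamashIncl (u : Fin c →₀ ℕ) :
    TaylorModule 𝕜 n r →ₗ[MvPolynomial (Fin n) 𝕜] ShamashModule 𝕜 n r c a :=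
  Finsupp.lsum (MvPolynomial (Fin n) 𝕜) fun S =>
    Finsupp.lsingle (u, S) ∘ₗ Algebra.linearMap _ (CIRing 𝕜 n c a)

theorem shamashIncl_single (u : Fin c →₀ ℕ) (S : Finset (Fin r)) (q : MvPolynomial (Fin n) 𝕜) :
    shamashIncl a u (Finsupp.single S q) = Finsupp.single (u, S) (algebraMap _ _ q) := by
  simp [shamashIncl]

theorem shamashIncl_smul_eq_zero (u : Fin c →₀ ℕ) (i : Fin c) (x : TaylorModule 𝕜 n r) :
    shamashIncl a u (a i • x) = 0 := by
  rw [map_smul, ← algebraMap_smul (CIRing 𝕜 n c a) (a i), Ideal.Quotient.algebraMap_eq,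
    Ideal.Quotient.eq_zero_iff_mem.mpr (Ideal.subset_span (Set.mem_range_self i))]
  exact zero_smul (CIRing 𝕜 n c a) (shamashIncl a u x)

theorem shamashPhi_shamashIncl (u : Fin c →₀ ℕ) (x : TaylorModule 𝕜 n r) :
    shamashPhi v a f (shamashIncl a u x) = shamashIncl a u (taylorTau 𝕜 v x)
      + ∑ i ∈ univ.filter fun i => 0 < u i,
          shamashIncl a (u - Finsupp.single i 1) (taylorHtpy 𝕜 v (f i) x) := by
  induction x using Finsupp.induction_linear with
  | zero => simp
  | add x y hx hy =>
    simp only [map_add, hx, hy, sum_add_distrib]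
    abel
  | single S q =>
    simp only [shamashIncl_single, shamashPhi, Finsupp.lsum_single, LinearMap.toSpanSingleton_apply,
      taylorTau_single, taylorHtpy_single, map_sum, smul_add, smul_sum, Finsupp.smul_single,
      smul_eq_mul, map_mul]

theorem shamashIncl_taylorHtpy_sum_sum_eq_zero (u : Fin c →₀ ℕ) (x : TaylorModule 𝕜 n r) :
    ∑ i ∈ univ.filter fun i => 0 < u i,
      ∑ j ∈ univ.filter fun j => 0 < (u - Finsupp.single i 1 : Fin c →₀ ℕ) j,
            shamashIncl a (u - Finsupp.single i 1 - Finsupp.single j 1)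
            (taylorHtpy 𝕜 v (f j) (taylorHtpy 𝕜 v (f i) x)) = 0 := by
  refine sum_sum_eq_zero_of_add_swap (fun i j => ?_) _ (fun i _ j _ => ?_) (fun i _ _ => ?_)
  · simp only [mem_filter, mem_univ, true_and, Finsupp.tsub_apply, Finsupp.single_apply]
    grind
  · rw [tsub_right_comm, ← map_add, show taylorHtpy 𝕜 v (f j) (taylorHtpy 𝕜 v (f i) x)
        + taylorHtpy 𝕜 v (f i) (taylorHtpy 𝕜 v (f j) x) = 0 from
      LinearMap.congr_fun (taylorHtpy_comp_add_comp_swap v (f j) (f i)) x, map_zero]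
  · rw [show taylorHtpy 𝕜 v (f i) (taylorHtpy 𝕜 v (f i) x) = 0 from
      LinearMap.congr_fun (taylorHtpy_comp_self v (f i)) x, map_zero]

theorem shamashPhi_shamashPhi_shamashIncl (ha : ∀ i, a i = ∑ j, f i j * monomial (v j) 1)
    (u : Fin c →₀ ℕ) (x : TaylorModule 𝕜 n r) :
    shamashPhi v a f (shamashPhi v a f (shamashIncl a u x)) = 0 := by
  have hττ : shamashIncl a u (taylorTau 𝕜 v (taylorTau 𝕜 v x)) = 0 := by
    rw [show taylorTau 𝕜 v (taylorTau 𝕜 v x) = 0 from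
      LinearMap.congr_fun (taylorTau_comp_taylorTau v) x, map_zero]
  have hτσ : ∀ i, shamashIncl a (u - Finsupp.single i 1) (taylorHtpy 𝕜 v (f i) (taylorTau 𝕜 v x))
      + shamashIncl a (u - Finsupp.single i 1) (taylorTau 𝕜 v (taylorHtpy 𝕜 v (f i) x)) = 0 :=
    fun i => by
      rw [← map_add, add_comm, show taylorTau 𝕜 v (taylorHtpy 𝕜 v (f i) x)
          + taylorHtpy 𝕜 v (f i) (taylorTau 𝕜 v x) = a i • x by
        rw [ha i]; exact LinearMap.congr_fun (taylorTau_comp_taylorHtpy_add v (f i)) x,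
        shamashIncl_smul_eq_zero]
  simp only [shamashPhi_shamashIncl, map_add, map_sum, sum_add_distrib]
  rw [hττ, zero_add, ← add_assoc, ← sum_add_distrib, sum_eq_zero fun i _ => hτσ i, zero_add,
    shamashIncl_taylorHtpy_sum_sum_eq_zero]

end Shamash

/-- The Shamash differential built from the Taylor homotopies squares to
zero over `R = Q/⟨a₁,…,a_c⟩`: `φ ∘ φ = 0`.
Here `m_j = x^{v j}` and `a_i = Σ_j f_{i,j} m_j`. -/
theorem shamash_phi_squared_zero {𝕜 : Type*} [Field 𝕜] {n r c : ℕ}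
    (v : Fin r → (Fin n →₀ ℕ)) (a : Fin c → MvPolynomial (Fin n) 𝕜)
    (f : Fin c → Fin r → MvPolynomial (Fin n) 𝕜)
    (ha : ∀ i, a i = ∑ j : Fin r, f i j * monomial (v j) 1) :
    shamashPhi v a f ∘ₗ shamashPhi v a f = 0 := by
  refine Finsupp.lhom_ext' fun ⟨u, S⟩ => LinearMap.ext_ring ?_
  have hbasis : Finsupp.single (u, S) 1 = shamashIncl a u (Finsupp.single S 1) := by
    rw [shamashIncl_single, map_one]
  rw [LinearMap.comp_apply, LinearMap.comp_apply, Finsupp.lsingle_apply, hbasis,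
    shamashPhi_shamashPhi_shamashIncl v a f ha, LinearMap.zero_comp, LinearMap.zero_apply]
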